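/- The spatial–spatial torsion d-tensor of the Cartan canonical connection of the autonomous metrical multi-time Lagrange space of electrodynamics, defined as R^{(m)}_{(μ)ij} = δN^{(m)}_{(μ)i}/δx^j − δN^{(m)}_{(μ)j}/δx^i, satisfies, for all indices and all (t,x,y): R^{(m)}_{(μ)ij} = Σ_k r^m_{kij}(x) y^k_μ + (1/4)·Σ_{η,k} h_{μη}(t) g^{mk}(x)·[U^{(η)}_{(k)i|j} − U^{(η)}_{(k)j|i}], where r^m_{kij} = ∂γ^m_{ki}/∂x^j − ∂γ^m_{kj}/∂x^i + Σ_l (γ^l_{ki} γ^m_{lj} − γ^l_{kj} γ^m_{li}) is the curvature tensor of g, and U^{(η)}_{(k)i|j} = ∂U^{(η)}_{(k)i}/∂x^j − Σ_l γ^l_{kj} U^{(η)}_{(l)i} − Σ_l γ^l_{ij} U^{(η)}_{(k)l} is the spatial horizontal covariant derivative. -/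

import Mathlib

/- STATEMENT 6: The spatial–spatial torsion d-tensor of the Cartan canonical
connection satisfies
`R^{(m)}_{(μ)ij} = Σ_k r^m_{kij} y^k_μ + (1/4)Σ_{η,k} h_{μη} g^{mk}·[U^{(η)}_{(k)i|j} − U^{(η)}_{(k)j|i}]`,
where `r^m_{kij}` is the curvature tensor of `g` and `_{|j}` is the spatial horizontal
covariant derivative. -/

open scoped BigOperators

noncomputable section

def pd {m : ℕ} (f : (Fin m → ℝ) → ℝ) (a : Fin m) (t : Fin m → ℝ) : ℝ :=
  fderiv ℝ f t (Pi.single a 1)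

def pdY {n p : ℕ} (f : (Fin n → Fin p → ℝ) → ℝ) (i : Fin n) (a : Fin p)
    (y : Fin n → Fin p → ℝ) : ℝ :=
  fderiv ℝ f y (Pi.single i (Pi.single a 1))

/-- Christoffel symbols `H^c_{ab}` of the temporal metric `h`. -/
def chT {p : ℕ} (h : (Fin p → ℝ) → Matrix (Fin p) (Fin p) ℝ)
    (c a b : Fin p) (t : Fin p → ℝ) : ℝ :=
  (1/2) * ∑ e, (h t)⁻¹ c e *
    (pd (fun s => h s e a) b t + pd (fun s => h s e b) a t - pd (fun s => h s a b) e t)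

/-- Christoffel symbols `γ^i_{jk}` of the spatial metric `g`. -/
def chS {n : ℕ} (g : (Fin n → ℝ) → Matrix (Fin n) (Fin n) ℝ)
    (i j k : Fin n) (x : Fin n → ℝ) : ℝ :=
  (1/2) * ∑ m, (g x)⁻¹ i m *
    (pd (fun z => g z m j) k x + pd (fun z => g z m k) j x - pd (fun z => g z j k) m x)

/-- `U^{(a)}_{(i)j} = ∂U^{(a)}_{(i)}/∂x^j − ∂U^{(a)}_{(j)}/∂x^i`. -/
def Ucurl {p n : ℕ} (U : Fin p → Fin n → (Fin p → ℝ) → (Fin n → ℝ) → ℝ)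
    (a : Fin p) (i j : Fin n) (t : Fin p → ℝ) (x : Fin n → ℝ) : ℝ :=
  pd (fun z => U a i t z) j x - pd (fun z => U a j t z) i x

/-- Temporal components `M^{(i)}_{(a)b} = −Σ_c H^c_{ab}(t) y^i_c` of the canonical
nonlinear connection. -/
def Mcon {p n : ℕ} (h : (Fin p → ℝ) → Matrix (Fin p) (Fin p) ℝ)
    (i : Fin n) (a b : Fin p) (t : Fin p → ℝ) (y : Fin n → Fin p → ℝ) : ℝ :=
  -∑ c, chT h c a b t * y i c

/-- Spatial components
`N^{(i)}_{(a)j} = Σ_k γ^i_{jk}(x) y^k_a + (1/4)Σ_{c,l} h_{ac}(t) g^{il}(x) U^{(c)}_{(l)j}(t,x)`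
of the canonical nonlinear connection. -/
def Ncon {p n : ℕ} (h : (Fin p → ℝ) → Matrix (Fin p) (Fin p) ℝ)
    (g : (Fin n → ℝ) → Matrix (Fin n) (Fin n) ℝ)
    (U : Fin p → Fin n → (Fin p → ℝ) → (Fin n → ℝ) → ℝ)
    (i : Fin n) (a : Fin p) (j : Fin n) (t : Fin p → ℝ) (x : Fin n → ℝ)
    (y : Fin n → Fin p → ℝ) : ℝ :=
  (∑ k, chS g i j k x * y k a)
    + (1/4) * ∑ c, ∑ l, h t a c * (g x)⁻¹ i l * Ucurl U c l j t x

/-- Adapted temporal derivative `δ/δt^b = ∂/∂t^b − Σ_{k,c} M^{(k)}_{(c)b} ∂/∂y^k_c`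
applied to a function on the 1-jet space. -/
def deltaT {p n : ℕ} (h : (Fin p → ℝ) → Matrix (Fin p) (Fin p) ℝ)
    (J : (Fin p → ℝ) → (Fin n → ℝ) → (Fin n → Fin p → ℝ) → ℝ) (b : Fin p)
    (t : Fin p → ℝ) (x : Fin n → ℝ) (y : Fin n → Fin p → ℝ) : ℝ :=
  pd (fun s => J s x y) b t - ∑ k, ∑ c, Mcon h k c b t y * pdY (J t x) k c y

/-- Adapted spatial derivative `δ/δx^j = ∂/∂x^j − Σ_{k,c} N^{(k)}_{(c)j} ∂/∂y^k_c`
applied to a function on the 1-jet space. -/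
def deltaX {p n : ℕ} (h : (Fin p → ℝ) → Matrix (Fin p) (Fin p) ℝ)
    (g : (Fin n → ℝ) → Matrix (Fin n) (Fin n) ℝ)
    (U : Fin p → Fin n → (Fin p → ℝ) → (Fin n → ℝ) → ℝ)
    (J : (Fin p → ℝ) → (Fin n → ℝ) → (Fin n → Fin p → ℝ) → ℝ) (j : Fin n)
    (t : Fin p → ℝ) (x : Fin n → ℝ) (y : Fin n → Fin p → ℝ) : ℝ :=
  pd (fun z => J t z y) j x - ∑ k, ∑ c, Ncon h g U k c j t x y * pdY (J t x) k c y

/-- Curvature tensor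
`r^m_{kij} = ∂γ^m_{ki}/∂x^j − ∂γ^m_{kj}/∂x^i + Σ_l (γ^l_{ki}γ^m_{lj} − γ^l_{kj}γ^m_{li})`
of the spatial metric `g`. -/
def curvS {n : ℕ} (g : (Fin n → ℝ) → Matrix (Fin n) (Fin n) ℝ)
    (m k i j : Fin n) (x : Fin n → ℝ) : ℝ :=
  pd (fun z => chS g m k i z) j x - pd (fun z => chS g m k j z) i x
    + ∑ l, (chS g l k i x * chS g m l j x - chS g l k j x * chS g m l i x)

/-- Spatial horizontal covariant derivative
`U^{(e)}_{(k)i|j} = ∂U^{(e)}_{(k)i}/∂x^j − Σ_l γ^l_{kj} U^{(e)}_{(l)i} − Σ_l γ^l_{ij} U^{(e)}_{(k)l}`. -/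
def Ucov {p n : ℕ} (g : (Fin n → ℝ) → Matrix (Fin n) (Fin n) ℝ)
    (U : Fin p → Fin n → (Fin p → ℝ) → (Fin n → ℝ) → ℝ)
    (e : Fin p) (k i j : Fin n) (t : Fin p → ℝ) (x : Fin n → ℝ) : ℝ :=
  pd (fun z => Ucurl U e k i t z) j x
    - (∑ l, chS g l k j x * Ucurl U e l i t x)
    - (∑ l, chS g l i j x * Ucurl U e k l t x)

/-- Spatial–spatial torsion `R^{(m)}_{(μ)ij} = δN^{(m)}_{(μ)i}/δx^j − δN^{(m)}_{(μ)j}/δx^i`. -/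
def torsionSS {p n : ℕ} (h : (Fin p → ℝ) → Matrix (Fin p) (Fin p) ℝ)
    (g : (Fin n → ℝ) → Matrix (Fin n) (Fin n) ℝ)
    (U : Fin p → Fin n → (Fin p → ℝ) → (Fin n → ℝ) → ℝ)
    (m : Fin n) (mu : Fin p) (i j : Fin n)
    (t : Fin p → ℝ) (x : Fin n → ℝ) (y : Fin n → Fin p → ℝ) : ℝ :=
  deltaX h g U (fun s z w => Ncon h g U m mu i s z w) j t x y
    - deltaX h g U (fun s z w => Ncon h g U m mu j s z w) i t x y


set_option linter.unusedSectionVars false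

lemma pd_const {m : ℕ} (c : ℝ) (a : Fin m) (t : Fin m → ℝ) : pd (fun _ => c) a t = 0 := by
  simp [pd]

lemma pd_add {m : ℕ} {f g : (Fin m → ℝ) → ℝ} {t : Fin m → ℝ}
    (hf : DifferentiableAt ℝ f t) (hg : DifferentiableAt ℝ g t) (a : Fin m) :
    pd (fun s => f s + g s) a t = pd f a t + pd g a t := by
  simp [pd, fderiv_fun_add hf hg]

lemma pd_mul {m : ℕ} {f g : (Fin m → ℝ) → ℝ} {t : Fin m → ℝ}
    (hf : DifferentiableAt ℝ f t) (hg : DifferentiableAt ℝ g t) (a : Fin m) :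
    pd (fun s => f s * g s) a t = pd f a t * g t + f t * pd g a t := by
  simp [pd, fderiv_fun_mul hf hg]; ring

lemma pd_const_mul {m : ℕ} {f : (Fin m → ℝ) → ℝ} {t : Fin m → ℝ}
    (hf : DifferentiableAt ℝ f t) (c : ℝ) (a : Fin m) :
    pd (fun s => c * f s) a t = c * pd f a t := by
  simp [pd, fderiv_const_mul hf c]

lemma pd_sum {m : ℕ} {ι : Type*} (s : Finset ι) (f : ι → (Fin m → ℝ) → ℝ) {t : Fin m → ℝ}
    (h : ∀ i ∈ s, DifferentiableAt ℝ (f i) t) (a : Fin m) :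
    pd (fun z => ∑ i ∈ s, f i z) a t = ∑ i ∈ s, pd (f i) a t := by
  simp [pd, fderiv_fun_sum h]

lemma contDiff_pd {m : ℕ} {f : (Fin m → ℝ) → ℝ} (hf : ContDiff ℝ (⊤ : ℕ∞) f) (a : Fin m) :
    ContDiff ℝ (⊤ : ℕ∞) (pd f a) := by
  have h1 : ContDiff ℝ ((⊤ : ℕ∞) : WithTop ℕ∞) (fderiv ℝ f) := hf.fderiv_right (by simp)
  exact h1.clm_apply contDiff_const

lemma contDiff_det {n : ℕ} (M : (Fin n → ℝ) → Matrix (Fin n) (Fin n) ℝ)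
    (hM : ∀ a b, ContDiff ℝ (⊤ : ℕ∞) fun x => M x a b) :
    ContDiff ℝ (⊤ : ℕ∞) fun x => (M x).det := by
  have h : (fun x => (M x).det)
      = fun x => ∑ σ : Equiv.Perm (Fin n), ((Equiv.Perm.sign σ : ℤ) : ℝ) * ∏ i, M x (σ i) i := by
    funext x; rw [Matrix.det_apply']
  rw [h]
  exact ContDiff.sum fun σ _ => contDiff_const.mul (contDiff_prod fun i _ => hM (σ i) i)

lemma contDiff_inv_entry {n : ℕ} (M : (Fin n → ℝ) → Matrix (Fin n) (Fin n) ℝ)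
    (hM : ∀ a b, ContDiff ℝ (⊤ : ℕ∞) fun x => M x a b)
    (hdet : ∀ x, IsUnit (M x).det) (a b : Fin n) :
    ContDiff ℝ (⊤ : ℕ∞) fun x => (M x)⁻¹ a b := by
  have h : (fun x => (M x)⁻¹ a b)
      = fun x => ((M x).det)⁻¹ * ((M x).updateRow b (Pi.single a 1)).det := by
    funext x
    rw [Matrix.inv_def, Matrix.smul_apply, Matrix.adjugate_apply, Ring.inverse_eq_inv']
    rfl
  rw [h]
  refine ContDiff.mul (ContDiff.inv (contDiff_det M hM) fun x => ?_) ?_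
  · exact (hdet x).ne_zero
  · refine contDiff_det _ fun c d => ?_
    by_cases hc : c = b
    · simp [hc, Matrix.updateRow_apply]
      exact contDiff_const
    · simp [Matrix.updateRow_apply, hc]
      exact hM c d


section Spatial
variable {n : ℕ} (g : (Fin n → ℝ) → Matrix (Fin n) (Fin n) ℝ)
  (gsmooth : ∀ i j, ContDiff ℝ (⊤ : ℕ∞) (fun x => g x i j))
  (gsymm : ∀ x, (g x).IsSymm)
  (ginv : ∀ x, IsUnit (g x).det)

include gsmooth ginv in
lemma contDiff_chS (i j k : Fin n) : ContDiff ℝ (⊤ : ℕ∞) (chS g i j k) := by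
  unfold chS
  refine contDiff_const.mul (ContDiff.sum fun m _ => ?_)
  exact (contDiff_inv_entry g gsmooth ginv i m).mul
    (((contDiff_pd (gsmooth m j) k).add (contDiff_pd (gsmooth m k) j)).sub
      (contDiff_pd (gsmooth j k) m))

include gsymm in
lemma g_entry_symm (a b : Fin n) : (fun z => g z a b) = (fun z => g z b a) := by
  funext z; exact (gsymm z).apply b a

include gsymm in
lemma chS_symm (i j k : Fin n) (x : Fin n → ℝ) : chS g i j k x = chS g i k j x := by
  unfold chS
  congr 1
  refine Finset.sum_congr rfl fun m _ => ?_
  rw [g_entry_symm g gsymm j k]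
  ring

include gsmooth ginv in
lemma pd_ginv (a b : Fin n) (j : Fin n) (x : Fin n → ℝ) :
    pd (fun z => (g z)⁻¹ a b) j x
      = -∑ c, ∑ d, (g x)⁻¹ a c * pd (fun z => g z c d) j x * (g x)⁻¹ d b := by
  have dg : ∀ a b, DifferentiableAt ℝ (fun z => g z a b) x :=
    fun a b => ((gsmooth a b).differentiable (by simp)).differentiableAt
  have dinv : ∀ a b, DifferentiableAt ℝ (fun z => (g z)⁻¹ a b) x :=
    fun a b => ((contDiff_inv_entry g gsmooth ginv a b).differentiable (by simp)).differentiableAt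
  -- key : for each e, Σ_c pd(inv a c) * g c e = - Σ_c inv a c * pd (g c e)
  have key : ∀ e, ∑ c, pd (fun z => (g z)⁻¹ a c) j x * g x c e
      = -∑ c, (g x)⁻¹ a c * pd (fun z => g z c e) j x := by
    intro e
    have hfun : (fun z => ∑ c, (g z)⁻¹ a c * g z c e)
        = (fun _ : Fin n → ℝ => if a = e then (1:ℝ) else 0) := by
      funext z
      have := Matrix.nonsing_inv_mul (g z) (ginv z)
      have h2 : ((g z)⁻¹ * g z) a e = (1 : Matrix (Fin n) (Fin n) ℝ) a e := by rw [this]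
      rw [Matrix.mul_apply] at h2
      rw [h2, Matrix.one_apply]
    have h0 : pd (fun z => ∑ c, (g z)⁻¹ a c * g z c e) j x = 0 := by
      rw [hfun, pd_const]
    rw [pd_sum _ _ (fun c _ => ((dinv a c).fun_mul (dg c e)))] at h0
    have h1 : ∀ c : Fin n, pd (fun z => (g z)⁻¹ a c * g z c e) j x
        = pd (fun z => (g z)⁻¹ a c) j x * g x c e + (g x)⁻¹ a c * pd (fun z => g z c e) j x :=
      fun c => pd_mul (dinv a c) (dg c e) j
    simp only [h1, Finset.sum_add_distrib] at h0
    linarith [h0]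
  have hgg : ∀ c, ∑ e, g x c e * (g x)⁻¹ e b = if c = b then (1:ℝ) else 0 := by
    intro c
    have h2 : (g x * (g x)⁻¹) c b = (1 : Matrix (Fin n) (Fin n) ℝ) c b := by
      rw [Matrix.mul_nonsing_inv _ (ginv x)]
    rw [Matrix.mul_apply] at h2
    rw [h2, Matrix.one_apply]
  have contract : ∑ e, (∑ c, pd (fun z => (g z)⁻¹ a c) j x * g x c e) * (g x)⁻¹ e b
      = pd (fun z => (g z)⁻¹ a b) j x := by
    calc ∑ e, (∑ c, pd (fun z => (g z)⁻¹ a c) j x * g x c e) * (g x)⁻¹ e b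
        = ∑ c, pd (fun z => (g z)⁻¹ a c) j x * ∑ e, g x c e * (g x)⁻¹ e b := by
          simp only [Finset.sum_mul, Finset.mul_sum, mul_assoc]
          exact Finset.sum_comm
      _ = ∑ c, pd (fun z => (g z)⁻¹ a c) j x * (if c = b then (1:ℝ) else 0) := by
          refine Finset.sum_congr rfl fun c _ => by rw [hgg c]
      _ = pd (fun z => (g z)⁻¹ a b) j x := by simp
  rw [← contract]
  calc ∑ e, (∑ c, pd (fun z => (g z)⁻¹ a c) j x * g x c e) * (g x)⁻¹ e b
      = ∑ e, (-∑ c, (g x)⁻¹ a c * pd (fun z => g z c e) j x) * (g x)⁻¹ e b := by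
        refine Finset.sum_congr rfl fun e _ => by rw [key e]
    _ = -∑ e, ∑ c, (g x)⁻¹ a c * pd (fun z => g z c e) j x * (g x)⁻¹ e b := by
        simp [Finset.sum_mul, neg_mul]
    _ = -∑ c, ∑ e, (g x)⁻¹ a c * pd (fun z => g z c e) j x * (g x)⁻¹ e b := by
        rw [Finset.sum_comm]


include gsmooth gsymm ginv in
lemma sum_g_chS (a b j : Fin n) (x : Fin n → ℝ) :
    ∑ c, g x c b * chS g c a j x
      = (1/2) * (pd (fun z => g z b a) j x + pd (fun z => g z b j) a x
          - pd (fun z => g z a j) b x) := by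
  have hgg : ∀ m, ∑ c, g x c b * (g x)⁻¹ c m = if b = m then (1:ℝ) else 0 := by
    intro m
    have h2 : (g x * (g x)⁻¹) b m = (1 : Matrix (Fin n) (Fin n) ℝ) b m := by
      rw [Matrix.mul_nonsing_inv _ (ginv x)]
    rw [Matrix.mul_apply] at h2
    have h3 : ∑ c, g x c b * (g x)⁻¹ c m = ∑ c, g x b c * (g x)⁻¹ c m :=
      Finset.sum_congr rfl fun c _ => by rw [(gsymm x).apply c b]
    rw [h3, h2, Matrix.one_apply]
  calc ∑ c, g x c b * chS g c a j x
      = ∑ m, (∑ c, g x c b * (g x)⁻¹ c m) *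
          ((1/2) * (pd (fun z => g z m a) j x + pd (fun z => g z m j) a x
            - pd (fun z => g z a j) m x)) := by
        unfold chS
        simp only [Finset.mul_sum, Finset.sum_mul]
        rw [Finset.sum_comm]
        exact Finset.sum_congr rfl fun c _ => Finset.sum_congr rfl fun m _ => by ring
    _ = ∑ m, (if b = m then (1:ℝ) else 0) *
          ((1/2) * (pd (fun z => g z m a) j x + pd (fun z => g z m j) a x
            - pd (fun z => g z a j) m x)) := by
        refine Finset.sum_congr rfl fun m _ => by rw [hgg m]
    _ = _ := by simp

include gsmooth gsymm ginv in
lemma pd_g_eq (a b j : Fin n) (x : Fin n → ℝ) :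
    pd (fun z => g z a b) j x
      = ∑ c, (g x c b * chS g c a j x + g x a c * chS g c b j x) := by
  rw [Finset.sum_add_distrib, sum_g_chS g gsmooth gsymm ginv a b j x]
  have h2 : ∑ c, g x a c * chS g c b j x = ∑ c, g x c a * chS g c b j x :=
    Finset.sum_congr rfl fun c _ => by rw [(gsymm x).apply a c]
  rw [h2, sum_g_chS g gsmooth gsymm ginv b a j x]
  rw [show (fun z => g z b a) = (fun z => g z a b) from g_entry_symm g gsymm b a,
      show (fun z => g z b j) = (fun z => g z j b) from g_entry_symm g gsymm b j,
      show (fun z => g z a j) = (fun z => g z j a) from g_entry_symm g gsymm a j]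
  ring

include gsmooth gsymm ginv in
lemma pd_ginv_chS (a b j : Fin n) (x : Fin n → ℝ) :
    pd (fun z => (g z)⁻¹ a b) j x
      = -∑ c, ((g x)⁻¹ a c * chS g b c j x + (g x)⁻¹ c b * chS g a c j x) := by
  have hgg : ∀ e, ∑ d, g x e d * (g x)⁻¹ d b = if e = b then (1:ℝ) else 0 := by
    intro e
    have h2 : (g x * (g x)⁻¹) e b = (1 : Matrix (Fin n) (Fin n) ℝ) e b := by
      rw [Matrix.mul_nonsing_inv _ (ginv x)]
    rw [Matrix.mul_apply] at h2
    rw [h2, Matrix.one_apply]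
  have hinvg : ∀ e, ∑ c, (g x)⁻¹ a c * g x c e = if a = e then (1:ℝ) else 0 := by
    intro e
    have h2 : ((g x)⁻¹ * g x) a e = (1 : Matrix (Fin n) (Fin n) ℝ) a e := by
      rw [Matrix.nonsing_inv_mul _ (ginv x)]
    rw [Matrix.mul_apply] at h2
    rw [h2, Matrix.one_apply]
  rw [pd_ginv g gsmooth ginv a b j x, neg_inj]
  have expand : ∀ c d, (g x)⁻¹ a c * pd (fun z => g z c d) j x * (g x)⁻¹ d b
      = (∑ e, (g x)⁻¹ a c * (g x e d * chS g e c j x) * (g x)⁻¹ d b)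
        + (∑ e, (g x)⁻¹ a c * (g x c e * chS g e d j x) * (g x)⁻¹ d b) := by
    intro c d
    rw [pd_g_eq g gsmooth gsymm ginv c d j x, ← Finset.sum_add_distrib,
      Finset.mul_sum, Finset.sum_mul]
    exact Finset.sum_congr rfl fun e _ => by ring
  have X1 : ∀ c, ∑ d, ∑ e, (g x)⁻¹ a c * (g x e d * chS g e c j x) * (g x)⁻¹ d b
      = (g x)⁻¹ a c * chS g b c j x := by
    intro c
    rw [Finset.sum_comm]
    calc ∑ e, ∑ d, (g x)⁻¹ a c * (g x e d * chS g e c j x) * (g x)⁻¹ d b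
        = ∑ e, ((g x)⁻¹ a c * chS g e c j x) * ∑ d, g x e d * (g x)⁻¹ d b := by
          refine Finset.sum_congr rfl fun e _ => ?_
          rw [Finset.mul_sum]
          exact Finset.sum_congr rfl fun d _ => by ring
      _ = ∑ e, ((g x)⁻¹ a c * chS g e c j x) * (if e = b then (1:ℝ) else 0) := by
          refine Finset.sum_congr rfl fun e _ => by rw [hgg e]
      _ = (g x)⁻¹ a c * chS g b c j x := by simp
  have X2 : ∑ c, ∑ d, ∑ e, (g x)⁻¹ a c * (g x c e * chS g e d j x) * (g x)⁻¹ d b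
      = ∑ d, (g x)⁻¹ d b * chS g a d j x := by
    rw [Finset.sum_comm]
    refine Finset.sum_congr rfl fun d _ => ?_
    rw [Finset.sum_comm]
    calc ∑ e, ∑ c, (g x)⁻¹ a c * (g x c e * chS g e d j x) * (g x)⁻¹ d b
        = ∑ e, (chS g e d j x * (g x)⁻¹ d b) * ∑ c, (g x)⁻¹ a c * g x c e := by
          refine Finset.sum_congr rfl fun e _ => ?_
          rw [Finset.mul_sum]
          exact Finset.sum_congr rfl fun c _ => by ring
      _ = ∑ e, (chS g e d j x * (g x)⁻¹ d b) * (if a = e then (1:ℝ) else 0) := by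
          refine Finset.sum_congr rfl fun e _ => by rw [hinvg e]
      _ = (g x)⁻¹ d b * chS g a d j x := by simp [mul_comm]
  calc ∑ c, ∑ d, (g x)⁻¹ a c * pd (fun z => g z c d) j x * (g x)⁻¹ d b
      = (∑ c, ∑ d, ∑ e, (g x)⁻¹ a c * (g x e d * chS g e c j x) * (g x)⁻¹ d b)
        + (∑ c, ∑ d, ∑ e, (g x)⁻¹ a c * (g x c e * chS g e d j x) * (g x)⁻¹ d b) := by
        rw [← Finset.sum_add_distrib]
        refine Finset.sum_congr rfl fun c _ => ?_
        rw [← Finset.sum_add_distrib]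
        exact Finset.sum_congr rfl fun d _ => expand c d
    _ = (∑ c, (g x)⁻¹ a c * chS g b c j x) + (∑ c, (g x)⁻¹ c b * chS g a c j x) := by
        rw [X2]
        congr 1
        exact Finset.sum_congr rfl fun c _ => X1 c
    _ = ∑ c, ((g x)⁻¹ a c * chS g b c j x + (g x)⁻¹ c b * chS g a c j x) := by
        rw [Finset.sum_add_distrib]

end Spatial

section YDeriv
variable {n p : ℕ}

private def evalCLM (k : Fin n) (e : Fin p) : (Fin n → Fin p → ℝ) →L[ℝ] ℝ :=
  (ContinuousLinearMap.proj e).comp (ContinuousLinearMap.proj (R := ℝ) (φ := fun _ : Fin n => Fin p → ℝ) k)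

lemma evalCLM_apply (k : Fin n) (e : Fin p) (w : Fin n → Fin p → ℝ) :
    evalCLM k e w = w k e := rfl

lemma diff_eval (k : Fin n) (e : Fin p) (y : Fin n → Fin p → ℝ) :
    DifferentiableAt ℝ (fun w : Fin n → Fin p → ℝ => w k e) y :=
  (evalCLM k e).differentiableAt

lemma pdY_affine (A : Fin n → ℝ) (e : Fin p) (C : ℝ) (k : Fin n) (c : Fin p)
    (y : Fin n → Fin p → ℝ) :
    pdY (fun w : Fin n → Fin p → ℝ => (∑ k', A k' * w k' e) + C) k c y
      = if c = e then A k else 0 := by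
  unfold pdY
  have d1 : ∀ k' ∈ Finset.univ, DifferentiableAt ℝ
      (fun w : Fin n → Fin p → ℝ => A k' * w k' e) y :=
    fun k' _ => (diff_eval k' e y).const_mul (A k')
  have dsum : DifferentiableAt ℝ (fun w : Fin n → Fin p → ℝ => ∑ k', A k' * w k' e) y :=
    DifferentiableAt.fun_sum d1
  rw [fderiv_fun_add dsum (differentiableAt_const C)]
  rw [fderiv_fun_sum d1]
  simp only [fderiv_fun_const, Pi.zero_apply, ContinuousLinearMap.add_apply,
    ContinuousLinearMap.zero_apply, add_zero, ContinuousLinearMap.sum_apply]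
  have hterm : ∀ k' : Fin n,
      fderiv ℝ (fun w : Fin n → Fin p → ℝ => A k' * w k' e) y (Pi.single k (Pi.single c 1))
        = A k' * (if k' = k then (if e = c then (1:ℝ) else 0) else 0) := by
    intro k'
    rw [fderiv_const_mul (diff_eval k' e y) (A k')]
    have hL : fderiv ℝ (fun w : Fin n → Fin p → ℝ => w k' e) y = evalCLM k' e :=
      (evalCLM k' e).fderiv
    rw [ContinuousLinearMap.smul_apply, hL, evalCLM_apply]
    rw [Pi.single_apply]
    by_cases hk : k' = k
    · simp [hk, Pi.single_apply]
    · simp [hk]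
  simp only [hterm]
  by_cases hc : c = e
  · simp [hc, Finset.sum_ite_eq]
  · have hec : e ≠ c := fun h => hc h.symm
    simp [hc, hec]

end YDeriv

theorem spatial_torsion_of_cartan_connection {p n : ℕ}
    (h : (Fin p → ℝ) → Matrix (Fin p) (Fin p) ℝ)
    (g : (Fin n → ℝ) → Matrix (Fin n) (Fin n) ℝ)
    (U : Fin p → Fin n → (Fin p → ℝ) → (Fin n → ℝ) → ℝ)
    (hsmooth : ∀ a b, ContDiff ℝ (⊤ : ℕ∞) (fun t => h t a b))
    (hsymm : ∀ t, (h t).IsSymm)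
    (hinv : ∀ t, IsUnit (h t).det)
    (gsmooth : ∀ i j, ContDiff ℝ (⊤ : ℕ∞) (fun x => g x i j))
    (gsymm : ∀ x, (g x).IsSymm)
    (ginv : ∀ x, IsUnit (g x).det)
    (Usmooth : ∀ a i, ContDiff ℝ (⊤ : ℕ∞) (fun q : (Fin p → ℝ) × (Fin n → ℝ) => U a i q.1 q.2))
    (m : Fin n) (mu : Fin p) (i j : Fin n)
    (t : Fin p → ℝ) (x : Fin n → ℝ) (y : Fin n → Fin p → ℝ) :
    torsionSS h g U m mu i j t x y =
      (∑ k, curvS g m k i j x * y k mu)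
        + (1/4) * ∑ e, ∑ k, h t mu e * (g x)⁻¹ m k *
            (Ucov g U e k i j t x - Ucov g U e k j i t x) := by
  classical
  have hUx : ∀ (a : Fin p) (i' : Fin n), ContDiff ℝ (⊤ : ℕ∞) (fun z => U a i' t z) := fun a i' =>
    (Usmooth a i').comp (f := fun z : Fin n → ℝ => (t, z)) (ContDiff.prodMk (contDiff_const (c := t)) contDiff_id)
  have hWsm : ∀ (a : Fin p) (l i' : Fin n), ContDiff ℝ (⊤ : ℕ∞) (fun z => Ucurl U a l i' t z) := by
    intro a l i'
    exact (contDiff_pd (hUx a l) i').sub (contDiff_pd (hUx a i') l)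
  have dchS : ∀ a b c, DifferentiableAt ℝ (chS g a b c) x := fun a b c =>
    ((contDiff_chS g gsmooth ginv a b c).differentiable (by simp)).differentiableAt
  have dinv : ∀ a b, DifferentiableAt ℝ (fun z => (g z)⁻¹ a b) x := fun a b =>
    ((contDiff_inv_entry g gsmooth ginv a b).differentiable (by simp)).differentiableAt
  have dW : ∀ (c : Fin p) (l i' : Fin n), DifferentiableAt ℝ (fun z => Ucurl U c l i' t z) x :=
    fun c l i' => ((hWsm c l i').differentiable (by simp)).differentiableAt
  have hpdN : ∀ (i' j' : Fin n), pd (fun z => Ncon h g U m mu i' t z y) j' x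
      = (∑ k, pd (chS g m i' k) j' x * y k mu)
        + (1/4) * ∑ c, ∑ l, h t mu c *
            (pd (fun z => (g z)⁻¹ m l) j' x * Ucurl U c l i' t x
              + (g x)⁻¹ m l * pd (fun z => Ucurl U c l i' t z) j' x) := by
    intro i' j'
    have dS1 : DifferentiableAt ℝ (fun z => ∑ k, chS g m i' k z * y k mu) x :=
      DifferentiableAt.fun_sum fun k _ => (dchS m i' k).mul_const _
    have dS2i : ∀ (c : Fin p), DifferentiableAt ℝ
        (fun z => ∑ l, h t mu c * (g z)⁻¹ m l * Ucurl U c l i' t z) x :=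
      fun c => DifferentiableAt.fun_sum fun l _ => ((dinv m l).const_mul _).mul (dW c l i')
    have dS2 : DifferentiableAt ℝ
        (fun z => (1/4 : ℝ) * ∑ c, ∑ l, h t mu c * (g z)⁻¹ m l * Ucurl U c l i' t z) x :=
      (DifferentiableAt.fun_sum fun c _ => dS2i c).const_mul _
    have step : pd (fun z => Ncon h g U m mu i' t z y) j' x
        = pd (fun z => ∑ k, chS g m i' k z * y k mu) j' x
          + pd (fun z => (1/4 : ℝ) * ∑ c, ∑ l,
              h t mu c * (g z)⁻¹ m l * Ucurl U c l i' t z) j' x :=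
      pd_add dS1 dS2 j'
    rw [step]
    congr 1
    · rw [pd_sum _ _ (fun k _ => (dchS m i' k).mul_const _) j']
      refine Finset.sum_congr rfl fun k _ => ?_
      have : pd (fun z => chS g m i' k z * y k mu) j' x
          = pd (chS g m i' k) j' x * y k mu + chS g m i' k x * pd (fun _ => y k mu) j' x :=
        pd_mul (dchS m i' k) (differentiableAt_const _) j'
      rw [this, pd_const]; ring
    · rw [pd_const_mul (DifferentiableAt.fun_sum fun c _ => dS2i c) ((1:ℝ)/4) j']
      congr 1
      rw [pd_sum _ _ (fun c _ => dS2i c) j']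
      refine Finset.sum_congr rfl fun c _ => ?_
      rw [pd_sum _ _ (fun l _ => ((dinv m l).const_mul _).fun_mul (dW c l i')) j']
      refine Finset.sum_congr rfl fun l _ => ?_
      have h1 : pd (fun z => h t mu c * (g z)⁻¹ m l * Ucurl U c l i' t z) j' x
          = pd (fun z => h t mu c * (g z)⁻¹ m l) j' x * Ucurl U c l i' t x
            + (h t mu c * (g x)⁻¹ m l) * pd (fun z => Ucurl U c l i' t z) j' x :=
        pd_mul ((dinv m l).const_mul _) (dW c l i') j'
      rw [h1, pd_const_mul (dinv m l) (h t mu c) j']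
      ring
  have hdel : ∀ (i' j' : Fin n),
      deltaX h g U (fun s z w => Ncon h g U m mu i' s z w) j' t x y
        = pd (fun z => Ncon h g U m mu i' t z y) j' x
          - ∑ k, Ncon h g U k mu j' t x y * chS g m i' k x := by
    intro i' j'
    unfold deltaX
    congr 1
    have hpy : ∀ (k : Fin n) (c : Fin p),
        pdY (fun w => Ncon h g U m mu i' t x w) k c y
          = if c = mu then chS g m i' k x else 0 := fun k c =>
      pdY_affine (fun k' => chS g m i' k' x) mu _ k c y
    calc ∑ k, ∑ c, Ncon h g U k c j' t x y * pdY (fun w => Ncon h g U m mu i' t x w) k c y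
        = ∑ k, ∑ c, (if c = mu then Ncon h g U k c j' t x y * chS g m i' k x else 0) := by
          refine Finset.sum_congr rfl fun k _ => Finset.sum_congr rfl fun c _ => ?_
          rw [hpy k c, mul_ite, mul_zero]
      _ = ∑ k, Ncon h g U k mu j' t x y * chS g m i' k x := by
          refine Finset.sum_congr rfl fun k _ => ?_
          simp
  unfold torsionSS
  rw [hdel i j, hdel j i, hpdN i j, hpdN j i]
  simp only [pd_ginv_chS g gsmooth gsymm ginv]
  simp only [Ncon, curvS, Ucov]
  simp only [add_mul, Finset.sum_add_distrib]
  simp only [neg_add, neg_mul, mul_neg, sub_mul, mul_sub, add_mul, mul_add,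
    Finset.sum_mul, Finset.mul_sum, Finset.sum_add_distrib, Finset.sum_sub_distrib,
    Finset.sum_neg_distrib, neg_neg, mul_assoc]

  have M1 : (∑ k, pd (chS g m i k) j x * y k mu)
      = ∑ k : Fin n, pd (fun z => chS g m k i z) j x * y k mu := by
    refine Finset.sum_congr rfl fun k _ => ?_
    have e : (fun z => chS g m k i z) = chS g m i k := funext fun z => chS_symm g gsymm m k i z
    rw [e]
  have M2 : (∑ k, pd (chS g m j k) i x * y k mu)
      = ∑ k : Fin n, pd (fun z => chS g m k j z) i x * y k mu := by
    refine Finset.sum_congr rfl fun k _ => ?_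
    have e : (fun z => chS g m k j z) = chS g m j k := funext fun z => chS_symm g gsymm m k j z
    rw [e]
  have M3 : (∑ k : Fin n, ∑ l : Fin n, chS g k j l x * (y l mu * chS g m i k x))
      = ∑ k : Fin n, ∑ l : Fin n, chS g l k j x * (chS g m l i x * y k mu) := by
    rw [Finset.sum_comm]
    refine Finset.sum_congr rfl fun k _ => Finset.sum_congr rfl fun l _ => ?_
    rw [chS_symm g gsymm l j k x, chS_symm g gsymm m i l x]; ring
  have M4 : (∑ k : Fin n, ∑ l : Fin n, chS g k i l x * (y l mu * chS g m j k x))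
      = ∑ k : Fin n, ∑ l : Fin n, chS g l k i x * (chS g m l j x * y k mu) := by
    rw [Finset.sum_comm]
    refine Finset.sum_congr rfl fun k _ => Finset.sum_congr rfl fun l _ => ?_
    rw [chS_symm g gsymm l i k x, chS_symm g gsymm m j l x]; ring
  have M5 : (∑ c : Fin p, ∑ l : Fin n, ∑ a : Fin n,
        1/4 * (h t mu c * ((g x)⁻¹ m a * (chS g l a j x * Ucurl U c l i t x))))
      = ∑ c : Fin p, ∑ k : Fin n, ∑ l : Fin n,
        1/4 * (h t mu c * ((g x)⁻¹ m k * (chS g l k j x * Ucurl U c l i t x))) :=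
    Finset.sum_congr rfl fun c _ => Finset.sum_comm
  have M6 : (∑ c : Fin p, ∑ l : Fin n, ∑ a : Fin n,
        1/4 * (h t mu c * ((g x)⁻¹ m a * (chS g l a i x * Ucurl U c l j t x))))
      = ∑ c : Fin p, ∑ k : Fin n, ∑ l : Fin n,
        1/4 * (h t mu c * ((g x)⁻¹ m k * (chS g l k i x * Ucurl U c l j t x))) :=
    Finset.sum_congr rfl fun c _ => Finset.sum_comm
  have M7 : (∑ k : Fin n, ∑ c : Fin p, ∑ l : Fin n,
        1/4 * (h t mu c * ((g x)⁻¹ k l * (Ucurl U c l i t x * chS g m j k x))))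
      = ∑ c : Fin p, ∑ l : Fin n, ∑ a : Fin n,
        1/4 * (h t mu c * ((g x)⁻¹ a l * (chS g m a j x * Ucurl U c l i t x))) := by
    rw [Finset.sum_comm]
    refine Finset.sum_congr rfl fun c _ => ?_
    rw [Finset.sum_comm]
    refine Finset.sum_congr rfl fun l _ => Finset.sum_congr rfl fun a _ => ?_
    rw [chS_symm g gsymm m a j x]; ring
  have M8 : (∑ k : Fin n, ∑ c : Fin p, ∑ l : Fin n,
        1/4 * (h t mu c * ((g x)⁻¹ k l * (Ucurl U c l j t x * chS g m i k x))))
      = ∑ c : Fin p, ∑ l : Fin n, ∑ a : Fin n,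
        1/4 * (h t mu c * ((g x)⁻¹ a l * (chS g m a i x * Ucurl U c l j t x))) := by
    rw [Finset.sum_comm]
    refine Finset.sum_congr rfl fun c _ => ?_
    rw [Finset.sum_comm]
    refine Finset.sum_congr rfl fun l _ => Finset.sum_congr rfl fun a _ => ?_
    rw [chS_symm g gsymm m a i x]; ring
  have M9 : (∑ c : Fin p, ∑ k : Fin n, ∑ l : Fin n,
        1/4 * (h t mu c * ((g x)⁻¹ m k * (chS g l i j x * Ucurl U c k l t x))))
      = ∑ c : Fin p, ∑ k : Fin n, ∑ l : Fin n,
        1/4 * (h t mu c * ((g x)⁻¹ m k * (chS g l j i x * Ucurl U c k l t x))) := by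
    refine Finset.sum_congr rfl fun c _ => Finset.sum_congr rfl fun k _ =>
      Finset.sum_congr rfl fun l _ => ?_
    rw [chS_symm g gsymm l i j x]
  linarith [M1, M2, M3, M4, M5, M6, M7, M8, M9]

end
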